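/- Let f be a Hénon-type polynomial automorphism of ℂ² of degree d > 1 satisfying the normalization and standard facts in the context, with f^n = (P_n, Q_n). Then for each j ∈ {z, w}, ∂_j g⁺ = (∂_j P_n)/(2 d^n P_n) + O(d^{-n}) locally uniformly on B := {g⁺ > 0}: for every compact set K ⊂ B there exist C > 0 and N ∈ ℕ such that for all n ≥ N and all (z,w) ∈ K one has P_n(z,w) ≠ 0 and | ∂_j g⁺(z,w) − (∂_j P_n(z,w))/(2 d^n P_n(z,w)) | ≤ C d^{-n}. -/

import Mathlib

open Filter Topology

noncomputable section

/-- Evaluation of a polynomial in two variables at a point of `ℂ²`. -/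
def ev (p : MvPolynomial (Fin 2) ℂ) (v : ℂ × ℂ) : ℂ :=
  MvPolynomial.eval ![v.1, v.2] p

/-- The Wirtinger partial derivative `∂_z` of a real function on `ℂ²`
(first coordinate): `∂_z g = (∂_x g − i ∂_y g)/2`. -/
def wirtZ (g : ℂ × ℂ → ℝ) (v : ℂ × ℂ) : ℂ :=
  (↑(fderiv ℝ g v ((1 : ℂ), (0 : ℂ))) - Complex.I * ↑(fderiv ℝ g v (Complex.I, (0 : ℂ)))) / 2

/-- The Wirtinger partial derivative `∂_w` of a real function on `ℂ²`
(second coordinate). -/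
def wirtW (g : ℂ × ℂ → ℝ) (v : ℂ × ℂ) : ℂ :=
  (↑(fderiv ℝ g v ((0 : ℂ), (1 : ℂ))) - Complex.I * ↑(fderiv ℝ g v ((0 : ℂ), Complex.I))) / 2

/-- `g` is pluriharmonic on the open set `B ⊆ ℂ²`: locally the real part of a
holomorphic function. -/
def Pluriharmonic (g : ℂ × ℂ → ℝ) (B : Set (ℂ × ℂ)) : Prop :=
  ∀ v ∈ B, ∃ U : Set (ℂ × ℂ), IsOpen U ∧ v ∈ U ∧ U ⊆ B ∧
    ∃ h : ℂ × ℂ → ℂ, DifferentiableOn ℂ h U ∧ ∀ w ∈ U, g w = (h w).re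

open Metric in
/-- Derivative of a bivariate polynomial along a horizontal line. -/
lemma hasDerivAt_ev_fst (p : MvPolynomial (Fin 2) ℂ) (a b t : ℂ) :
    HasDerivAt (fun s => ev p (a + s, b)) (ev (MvPolynomial.pderiv 0 p) (a + t, b)) t := by
  induction p using MvPolynomial.induction_on with
  | C c =>
      simpa [ev, MvPolynomial.pderiv_C] using hasDerivAt_const t (c : ℂ)
  | add p q hp hq =>
      simpa [ev, map_add] using hp.fun_add hq
  | mul_X p i hp =>
      fin_cases i
      · show HasDerivAt (fun s => ev (p * MvPolynomial.X 0) (a + s, b))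
            (ev (MvPolynomial.pderiv 0 (p * MvPolynomial.X 0)) (a + t, b)) t
        have h1 : HasDerivAt (fun s : ℂ => a + s) 1 t := (hasDerivAt_id t).const_add a
        have hfun : (fun s => ev (p * MvPolynomial.X 0) (a + s, b))
            = fun s => ev p (a + s, b) * (a + s) := by
          funext s; simp [ev]
        have hder : ev (MvPolynomial.pderiv 0 (p * MvPolynomial.X 0)) (a + t, b)
            = ev (MvPolynomial.pderiv 0 p) (a + t, b) * (a + t) + ev p (a + t, b) * 1 := by
          simp [ev, MvPolynomial.pderiv_mul]; ring
        rw [hfun, hder]; exact hp.mul h1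
      · show HasDerivAt (fun s => ev (p * MvPolynomial.X 1) (a + s, b))
            (ev (MvPolynomial.pderiv 0 (p * MvPolynomial.X 1)) (a + t, b)) t
        have h1 : HasDerivAt (fun _ : ℂ => b) 0 t := hasDerivAt_const t b
        have hfun : (fun s => ev (p * MvPolynomial.X 1) (a + s, b))
            = fun s => ev p (a + s, b) * b := by
          funext s; simp [ev]
        have hder : ev (MvPolynomial.pderiv 0 (p * MvPolynomial.X 1)) (a + t, b)
            = ev (MvPolynomial.pderiv 0 p) (a + t, b) * b + ev p (a + t, b) * 0 := by
          simp [ev, MvPolynomial.pderiv_mul,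
            MvPolynomial.pderiv_X_of_ne (show (1 : Fin 2) ≠ 0 by decide)]; ring
        rw [hfun, hder]; exact hp.mul h1

/-- Derivative of a bivariate polynomial along a vertical line. -/
lemma hasDerivAt_ev_snd (p : MvPolynomial (Fin 2) ℂ) (a b t : ℂ) :
    HasDerivAt (fun s => ev p (a, b + s)) (ev (MvPolynomial.pderiv 1 p) (a, b + t)) t := by
  induction p using MvPolynomial.induction_on with
  | C c =>
      simpa [ev, MvPolynomial.pderiv_C] using hasDerivAt_const t (c : ℂ)
  | add p q hp hq =>
      simpa [ev, map_add] using hp.fun_add hq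
  | mul_X p i hp =>
      fin_cases i
      · show HasDerivAt (fun s => ev (p * MvPolynomial.X 0) (a, b + s))
            (ev (MvPolynomial.pderiv 1 (p * MvPolynomial.X 0)) (a, b + t)) t
        have h1 : HasDerivAt (fun _ : ℂ => a) 0 t := hasDerivAt_const t a
        have hfun : (fun s => ev (p * MvPolynomial.X 0) (a, b + s))
            = fun s => ev p (a, b + s) * a := by
          funext s; simp [ev]
        have hder : ev (MvPolynomial.pderiv 1 (p * MvPolynomial.X 0)) (a, b + t)
            = ev (MvPolynomial.pderiv 1 p) (a, b + t) * a + ev p (a, b + t) * 0 := by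
          simp [ev, MvPolynomial.pderiv_mul,
            MvPolynomial.pderiv_X_of_ne (show (0 : Fin 2) ≠ 1 by decide)]; ring
        rw [hfun, hder]; exact hp.mul h1
      · show HasDerivAt (fun s => ev (p * MvPolynomial.X 1) (a, b + s))
            (ev (MvPolynomial.pderiv 1 (p * MvPolynomial.X 1)) (a, b + t)) t
        have h1 : HasDerivAt (fun s : ℂ => b + s) 1 t := (hasDerivAt_id t).const_add b
        have hfun : (fun s => ev (p * MvPolynomial.X 1) (a, b + s))
            = fun s => ev p (a, b + s) * (b + s) := by
          funext s; simp [ev]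
        have hder : ev (MvPolynomial.pderiv 1 (p * MvPolynomial.X 1)) (a, b + t)
            = ev (MvPolynomial.pderiv 1 p) (a, b + t) * (b + t) + ev p (a, b + t) * 1 := by
          simp [ev, MvPolynomial.pderiv_mul]; ring
        rw [hfun, hder]; exact hp.mul h1

/-- Wirtinger-type expression for the real part of a holomorphic function. -/
lemma wirt_re_of_holo (g : ℂ × ℂ → ℝ) (h : ℂ × ℂ → ℂ) (U : Set (ℂ × ℂ)) (hU : IsOpen U)
    (hh : DifferentiableOn ℂ h U) (hgh : ∀ w ∈ U, g w = (h w).re) (v : ℂ × ℂ) (hv : v ∈ U)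
    (e₁ e₂ : ℂ × ℂ) (he : e₂ = Complex.I • e₁) :
    ((fderiv ℝ g v e₁ : ℂ) - Complex.I * (fderiv ℝ g v e₂ : ℂ)) / 2
      = fderiv ℂ h v e₁ / 2 := by
  have hhv : DifferentiableAt ℂ h v := hh.differentiableAt (hU.mem_nhds hv)
  have hre : HasFDerivAt (fun w => (h w).re)
      (Complex.reCLM.comp ((fderiv ℂ h v).restrictScalars ℝ)) v :=
    (Complex.reCLM.hasFDerivAt).comp v (hhv.hasFDerivAt.restrictScalars ℝ)
  have heq : g =ᶠ[nhds v] fun w => (h w).re :=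
    Filter.eventuallyEq_of_mem (hU.mem_nhds hv) (fun w hw => hgh w hw)
  have hgder : HasFDerivAt g (Complex.reCLM.comp ((fderiv ℂ h v).restrictScalars ℝ)) v :=
    hre.congr_of_eventuallyEq heq
  rw [hgder.fderiv]
  set a := fderiv ℂ h v e₁ with ha
  have h1 : (Complex.reCLM.comp ((fderiv ℂ h v).restrictScalars ℝ)) e₁ = a.re := rfl
  have h2 : (Complex.reCLM.comp ((fderiv ℂ h v).restrictScalars ℝ)) e₂ = (Complex.I * a).re := by
    simp [he, ContinuousLinearMap.map_smul]; rfl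
  rw [h1, h2]
  simp [Complex.ext_iff]

open Metric in
/-- The key one-variable estimate: if `h1` is holomorphic with `gl = Re h1` on a disc,
`p1` is holomorphic nonvanishing, and `D·gl − log |p1|` is bounded by `C₀` on the disc,
then `D·h1′(0) − p1′(0)/p1(0)` is bounded by `3 e^{2C₀}/r`. -/
lemma line_bound (r C₀ D : ℝ) (hr : 0 < r)
    (h1 p1 : ℂ → ℂ) (gl : ℂ → ℝ)
    (hdiffh : ∀ t ∈ ball (0:ℂ) r, DifferentiableAt ℂ h1 t)
    (hgl : ∀ t ∈ ball (0:ℂ) r, gl t = (h1 t).re)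
    (a : ℂ) (ha : HasDerivAt h1 a 0)
    (hp1diff : ∀ t, DifferentiableAt ℂ p1 t)
    (q' : ℂ) (hq' : HasDerivAt p1 q' 0)
    (hPb : ∀ t ∈ ball (0:ℂ) r, p1 t ≠ 0 ∧
      |D * gl t - Real.log (‖p1 t‖)| ≤ C₀) :
    ‖(D : ℂ) * a - q' / p1 0‖ ≤ 3 * Real.exp (2 * C₀) / r := by
  have h0r : (0 : ℂ) ∈ ball (0 : ℂ) r := mem_ball_self hr
  set c : ℂ := (D : ℂ) with hc
  set G : ℂ → ℂ := fun t => Complex.exp (c * h1 t) / p1 t with hG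
  have hGdiff : DifferentiableOn ℂ G (ball (0:ℂ) r) := by
    intro t ht
    exact ((((hdiffh t ht).const_mul c).cexp).div (hp1diff t) (hPb t ht).1).differentiableWithinAt
  have habs : ∀ t ∈ ball (0:ℂ) r,
      ‖G t‖ = Real.exp (D * gl t - Real.log (‖p1 t‖)) := by
    intro t ht
    have hp0 : ‖p1 t‖ ≠ 0 := norm_ne_zero_iff.mpr (hPb t ht).1
    have hre : (c * h1 t).re = D * gl t := by
      rw [hgl t ht, hc]
      simp [Complex.mul_re]
    rw [hG]
    simp only [norm_div, Complex.norm_exp, hre]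
    rw [Real.exp_sub, Real.exp_log (lt_of_le_of_ne (norm_nonneg _) (Ne.symm hp0))]
  have hub : ∀ t ∈ ball (0:ℂ) r, ‖G t‖ ≤ Real.exp C₀ := by
    intro t ht
    rw [habs t ht]
    exact Real.exp_le_exp.2 ((abs_le.1 (hPb t ht).2).2)
  have hlb : Real.exp (-C₀) ≤ ‖G 0‖ := by
    rw [habs 0 h0r]
    exact Real.exp_le_exp.2 (neg_le.2 (neg_le.1 (abs_le.1 (hPb 0 h0r).2).1))
  have hmaps : Set.MapsTo G (ball (0:ℂ) r) (ball (G 0) (3 * Real.exp C₀)) := by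
    intro t ht
    rw [mem_ball, dist_eq_norm]
    calc ‖G t - G 0‖ ≤ ‖G t‖ + ‖G 0‖ := norm_sub_le _ _
      _ ≤ Real.exp C₀ + Real.exp C₀ := by
          exact add_le_add (hub t ht) (hub 0 h0r)
      _ < 3 * Real.exp C₀ := by nlinarith [Real.exp_pos C₀]
  have hderB : ‖deriv G 0‖ ≤ 3 * Real.exp C₀ / r :=
    Complex.norm_deriv_le_div_of_mapsTo_ball hGdiff (hmaps.mono_right Metric.ball_subset_closedBall) hr
  set E0 : ℂ := Complex.exp (c * h1 0) with hE0
  set p0 : ℂ := p1 0 with hp0def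
  have hp0ne : p0 ≠ 0 := (hPb 0 h0r).1
  have hE0ne : E0 ≠ 0 := Complex.exp_ne_zero _
  have hEder : HasDerivAt (fun t => Complex.exp (c * h1 t)) (E0 * (c * a)) 0 :=
    (ha.const_mul c).cexp
  have hGder : HasDerivAt G ((E0 * (c * a) * p0 - E0 * q') / p0 ^ 2) 0 :=
    hEder.div hq' hp0ne
  have hderiv : deriv G 0 = (E0 * (c * a) * p0 - E0 * q') / p0 ^ 2 := hGder.deriv
  have hG0 : G 0 = E0 / p0 := rfl
  have hkey : (D : ℂ) * a - q' / p0 = deriv G 0 / G 0 := by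
    rw [hderiv, hG0, hc]
    field_simp
  rw [hkey]
  rw [norm_div]
  have hstep : ‖deriv G 0‖ / ‖G 0‖
      ≤ (3 * Real.exp C₀ / r) / Real.exp (-C₀) := by
    apply div_le_div₀ (by positivity) _ (Real.exp_pos _) hlb
    exact hderB
  refine hstep.trans_eq ?_
  rw [Real.exp_neg, div_inv_eq_mul, two_mul, Real.exp_add]
  ring

/-- For a Hénon-type polynomial automorphism `f = (P₁, Q₁)` of `ℂ²` of
degree `d > 1` with iterates `f^n = (P_n, Q_n)` and Green function `g⁺`, one has, for each
variable `j ∈ {z, w}`, `∂_j g⁺ = (∂_j P_n)/(2 d^n P_n) + O(d^{-n})` locally uniformly on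
`B = {g⁺ > 0}`.  The standard facts listed in the context are taken as hypotheses. -/
theorem wirtinger_green_approximation_henon
    (d : ℕ) (hd : 1 < d)
    (P Q : ℕ → MvPolynomial (Fin 2) ℂ)
    (F : ℂ × ℂ → ℂ × ℂ)
    (hF : ∀ v : ℂ × ℂ, F v = (ev (P 1) v, ev (Q 1) v))
    (hauto : ∃ Pi Qi : MvPolynomial (Fin 2) ℂ, ∀ v : ℂ × ℂ,
      (ev Pi (F v), ev Qi (F v)) = v ∧ F (ev Pi v, ev Qi v) = v)
    (hiter : ∀ n : ℕ, 1 ≤ n → ∀ v : ℂ × ℂ, F^[n] v = (ev (P n) v, ev (Q n) v))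
    (hdeg : ∀ n : ℕ, 1 ≤ n →
      (P n).totalDegree = d ^ n ∧ (P n).degreeOf 0 = d ^ n ∧ (Q n).totalDegree < d ^ n)
    (g : ℂ × ℂ → ℝ)
    (hglim : TendstoLocallyUniformly
      (fun (n : ℕ) (v : ℂ × ℂ) => Real.log (max 1 ‖F^[n] v‖) / (d : ℝ) ^ n) g atTop)
    (hgcont : Continuous g)
    (B : Set (ℂ × ℂ)) (hB : B = {v : ℂ × ℂ | 0 < g v})
    (hph : Pluriharmonic g B)
    (hgP : ∀ K : Set (ℂ × ℂ), K ⊆ B → IsCompact K →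
      ∃ C > (0 : ℝ), ∃ N : ℕ, ∀ n : ℕ, N ≤ n → ∀ v ∈ K,
        ev (P n) v ≠ 0 ∧
        |g v - Real.log (‖ev (P n) v‖) / (d : ℝ) ^ n| ≤ C / (d : ℝ) ^ n)
    (hQP : ∀ K : Set (ℂ × ℂ), K ⊆ B → IsCompact K → ∀ ε > (0 : ℝ), ∃ N : ℕ,
      ∀ n : ℕ, N ≤ n → ∀ v ∈ K,
        ‖ev (Q n) v‖ ≤ ε * ‖ev (P n) v‖) :
    ∀ K : Set (ℂ × ℂ), K ⊆ B → IsCompact K →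
      ∃ C > (0 : ℝ), ∃ N : ℕ, ∀ n : ℕ, N ≤ n → ∀ v ∈ K,
        ev (P n) v ≠ 0 ∧
        ‖wirtZ g v -
            ev (MvPolynomial.pderiv 0 (P n)) v / (2 * (d : ℂ) ^ n * ev (P n) v)‖
          ≤ C / (d : ℝ) ^ n ∧
        ‖wirtW g v -
            ev (MvPolynomial.pderiv 1 (P n)) v / (2 * (d : ℂ) ^ n * ev (P n) v)‖
          ≤ C / (d : ℝ) ^ n := by
  
  intro K hKB hK
  rcases K.eq_empty_or_nonempty with hKe | hKne
  · exact ⟨1, one_pos, 0, fun n _ v hv => absurd hv (by simp [hKe])⟩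
  have key : ∀ x : ℂ × ℂ, x ∈ K → ∃ rx : ℝ, 0 < rx ∧ ∃ U : Set (ℂ × ℂ), IsOpen U ∧
      Metric.closedBall x (2 * rx) ⊆ U ∧ U ⊆ B ∧
      ∃ h : ℂ × ℂ → ℂ, DifferentiableOn ℂ h U ∧ ∀ w ∈ U, g w = (h w).re := by
    intro x hx
    obtain ⟨U, hUo, hxU, hUB, h, hhd, hhre⟩ := hph x (hKB hx)
    obtain ⟨ε, hε, hba⟩ := Metric.isOpen_iff.1 hUo x hxU
    refine ⟨ε / 3, by positivity, U, hUo, ?_, hUB, h, hhd, hhre⟩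
    refine (Metric.closedBall_subset_ball ?_).trans hba
    linarith
  choose rr hrpos UU hUopen hcbU hUB2 hfun hfdiff hfre using key
  have hcov : K ⊆ ⋃ x : K, Metric.ball (x : ℂ × ℂ) (rr x x.2) := by
    intro x hx
    exact Set.mem_iUnion.2 ⟨⟨x, hx⟩, Metric.mem_ball_self (hrpos x hx)⟩
  obtain ⟨t, ht⟩ := hK.elim_finite_subcover
    (fun x : K => Metric.ball (x : ℂ × ℂ) (rr x x.2)) (fun _ => Metric.isOpen_ball) hcov
  have htne : t.Nonempty := by
    obtain ⟨x, hx⟩ := hKne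
    obtain ⟨y, hyt, -⟩ := Set.mem_iUnion₂.1 (ht hx)
    exact ⟨y, hyt⟩
  set ρ : ℝ := t.inf' htne (fun x => rr x x.2) with hρ
  have hρpos : 0 < ρ := (Finset.lt_inf'_iff htne).2 fun x _ => hrpos x x.2
  set K' : Set (ℂ × ℂ) := ⋃ x ∈ t, Metric.closedBall (x : ℂ × ℂ) (2 * rr x x.2) with hK'def
  have hK'B : K' ⊆ B := Set.iUnion₂_subset fun x _ => (hcbU x x.2).trans (hUB2 x x.2)
  have hK'c : IsCompact K' :=
    t.finite_toSet.isCompact_biUnion fun i _ => isCompact_closedBall _ _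
  obtain ⟨C₀, hC₀pos, N₀, hN₀⟩ := hgP K' hK'B hK'c
  refine ⟨3 * Real.exp (2 * C₀) / ρ, by positivity, N₀, ?_⟩
  intro n hn v hv
  obtain ⟨x, hxt, hvx⟩ := Set.mem_iUnion₂.1 (ht hv)
  have hρle : ρ ≤ rr x x.2 := Finset.inf'_le _ hxt
  have hsub : ∀ w : ℂ × ℂ, dist w v < ρ →
      w ∈ Metric.closedBall (x : ℂ × ℂ) (2 * rr x x.2) := by
    intro w hw
    rw [Metric.mem_closedBall]
    have h1 : dist w ↑x ≤ dist w v + dist v ↑x := dist_triangle _ _ _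
    have h2 : dist v ↑x < rr x x.2 := Metric.mem_ball.1 hvx
    linarith
  have hwK' : ∀ w : ℂ × ℂ, dist w v < ρ → w ∈ K' :=
    fun w hw => Set.mem_biUnion hxt (hsub w hw)
  have hwU : ∀ w : ℂ × ℂ, dist w v < ρ → w ∈ UU x x.2 :=
    fun w hw => hcbU x x.2 (hsub w hw)
  have hvU : v ∈ UU x x.2 := hwU v (by simpa using hρpos)
  have hd1R : (1 : ℝ) < (d : ℝ) := by exact_mod_cast hd
  have hdpow : (0 : ℝ) < (d : ℝ) ^ n := by positivity
  have hcne : ((d : ℂ) ^ n) ≠ 0 := pow_ne_zero _ (Nat.cast_ne_zero.2 (by omega))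
  have hPv : ev (P n) v ≠ 0 := (hN₀ n hn v (hwK' v (by simpa using hρpos))).1
  have hPb : ∀ w : ℂ × ℂ, dist w v < ρ → ev (P n) w ≠ 0 ∧
      |(d : ℝ) ^ n * g w - Real.log (‖ev (P n) w‖)| ≤ C₀ := by
    intro w hw
    obtain ⟨hne, hb⟩ := hN₀ n hn w (hwK' w hw)
    refine ⟨hne, ?_⟩
    have heq : (d : ℝ) ^ n * g w - Real.log (‖ev (P n) w‖)
        = (d : ℝ) ^ n * (g w - Real.log (‖ev (P n) w‖) / (d : ℝ) ^ n) := by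
      field_simp
    rw [heq, abs_mul, abs_of_pos hdpow]
    calc (d : ℝ) ^ n * |g w - Real.log (‖ev (P n) w‖) / (d : ℝ) ^ n|
        ≤ (d : ℝ) ^ n * (C₀ / (d : ℝ) ^ n) := mul_le_mul_of_nonneg_left hb hdpow.le
      _ = C₀ := by field_simp
  have hdist1 : ∀ s : ℂ, dist ((v.1 + s, v.2) : ℂ × ℂ) v = ‖s‖ := by
    intro s
    rw [Prod.dist_eq]
    simp [Complex.dist_eq]
  have hdist2 : ∀ s : ℂ, dist ((v.1, v.2 + s) : ℂ × ℂ) v = ‖s‖ := by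
    intro s
    rw [Prod.dist_eq]
    simp [Complex.dist_eq]
  have hv0 : ((v.1 + 0, v.2) : ℂ × ℂ) = v := by simp
  have hv0' : ((v.1, v.2 + 0) : ℂ × ℂ) = v := by simp
  set h := hfun x x.2 with hhdef
  have hhU : DifferentiableOn ℂ h (UU x x.2) := hfdiff x x.2
  have hhre : ∀ w ∈ UU x x.2, g w = (h w).re := hfre x x.2
  have hhv : DifferentiableAt ℂ h v := hhU.differentiableAt ((hUopen x x.2).mem_nhds hvU)
  have hmemball : ∀ s : ℂ, s ∈ Metric.ball (0 : ℂ) ρ → ‖s‖ < ρ := by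
    intro s hs
    simpa [Complex.dist_eq] using Metric.mem_ball.1 hs
  refine ⟨hPv, ?_, ?_⟩
  · -- first coordinate
    have hu1 : HasDerivAt (fun s : ℂ => ((v.1 + s, v.2) : ℂ × ℂ)) ((1 : ℂ), (0 : ℂ)) 0 :=
      ((hasDerivAt_id (0 : ℂ)).const_add v.1).prodMk (hasDerivAt_const 0 v.2)
    have hF1 : HasFDerivAt h (fderiv ℂ h v) ((v.1 + 0, v.2) : ℂ × ℂ) := by
      rw [hv0]; exact hhv.hasFDerivAt
    have hcomp1 : HasDerivAt (fun s : ℂ => h (v.1 + s, v.2))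
        (fderiv ℂ h v ((1 : ℂ), (0 : ℂ))) 0 := hF1.comp_hasDerivAt 0 hu1
    have hdiffh1 : ∀ s ∈ Metric.ball (0 : ℂ) ρ,
        DifferentiableAt ℂ (fun s : ℂ => h (v.1 + s, v.2)) s := by
      intro s hs
      have hmem : ((v.1 + s, v.2) : ℂ × ℂ) ∈ UU x x.2 := by
        apply hwU; rw [hdist1]; exact hmemball s hs
      have hd1 : DifferentiableAt ℂ h ((v.1 + s, v.2) : ℂ × ℂ) :=
        hhU.differentiableAt ((hUopen x x.2).mem_nhds hmem)
      exact hd1.comp s ((differentiableAt_id.const_add _).prodMk (differentiableAt_const _))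
    have hgl1 : ∀ s ∈ Metric.ball (0 : ℂ) ρ,
        g (v.1 + s, v.2) = (h (v.1 + s, v.2)).re := by
      intro s hs
      apply hhre
      apply hwU; rw [hdist1]; exact hmemball s hs
    have hq1 : HasDerivAt (fun s => ev (P n) (v.1 + s, v.2))
        (ev (MvPolynomial.pderiv 0 (P n)) v) 0 := by
      have := hasDerivAt_ev_fst (P n) v.1 v.2 0
      rwa [hv0] at this
    have hPb1 : ∀ s ∈ Metric.ball (0 : ℂ) ρ, ev (P n) (v.1 + s, v.2) ≠ 0 ∧
        |(d : ℝ) ^ n * g (v.1 + s, v.2) -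
          Real.log (‖ev (P n) (v.1 + s, v.2)‖)| ≤ C₀ := by
      intro s hs
      apply hPb; rw [hdist1]; exact hmemball s hs
    have hb1 := line_bound ρ C₀ ((d : ℝ) ^ n) hρpos
      (fun s => h (v.1 + s, v.2)) (fun s => ev (P n) (v.1 + s, v.2))
      (fun s => g (v.1 + s, v.2)) hdiffh1 hgl1 _ hcomp1
      (fun s => (hasDerivAt_ev_fst (P n) v.1 v.2 s).differentiableAt) _ hq1 hPb1
    have hb1' : ‖(d : ℂ) ^ n * fderiv ℂ h v ((1 : ℂ), (0 : ℂ)) -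
        ev (MvPolynomial.pderiv 0 (P n)) v / ev (P n) v‖
        ≤ 3 * Real.exp (2 * C₀) / ρ := by
      have h2 := hb1
      simp only [hv0] at h2
      convert h2 using 3
      push_cast
      ring
    have hw1 : wirtZ g v = fderiv ℂ h v ((1 : ℂ), (0 : ℂ)) / 2 := by
      unfold wirtZ
      exact wirt_re_of_holo g h (UU x x.2) (hUopen x x.2) hhU hhre v hvU
        ((1 : ℂ), (0 : ℂ)) (Complex.I, 0) (by simp)
    have hfinal1 : wirtZ g v -
        ev (MvPolynomial.pderiv 0 (P n)) v / (2 * (d : ℂ) ^ n * ev (P n) v)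
        = ((d : ℂ) ^ n * fderiv ℂ h v ((1 : ℂ), (0 : ℂ)) -
            ev (MvPolynomial.pderiv 0 (P n)) v / ev (P n) v) / (2 * (d : ℂ) ^ n) := by
      rw [hw1]; field_simp
    rw [hfinal1, norm_div]
    have habs2 : ‖2 * (d : ℂ) ^ n‖ = 2 * (d : ℝ) ^ n := by
      rw [norm_mul, norm_pow]
      simp
    rw [habs2]
    calc ‖(d : ℂ) ^ n * fderiv ℂ h v ((1 : ℂ), (0 : ℂ)) -
            ev (MvPolynomial.pderiv 0 (P n)) v / ev (P n) v‖ / (2 * (d : ℝ) ^ n)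
        ≤ (3 * Real.exp (2 * C₀) / ρ) / (2 * (d : ℝ) ^ n) := by gcongr
      _ ≤ (3 * Real.exp (2 * C₀) / ρ) / (d : ℝ) ^ n := by
          apply div_le_div_of_nonneg_left (by positivity) hdpow (by linarith)
  · -- second coordinate
    have hu2 : HasDerivAt (fun s : ℂ => ((v.1, v.2 + s) : ℂ × ℂ)) ((0 : ℂ), (1 : ℂ)) 0 :=
      (hasDerivAt_const 0 v.1).prodMk ((hasDerivAt_id (0 : ℂ)).const_add v.2)
    have hF2 : HasFDerivAt h (fderiv ℂ h v) ((v.1, v.2 + 0) : ℂ × ℂ) := by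
      rw [hv0']; exact hhv.hasFDerivAt
    have hcomp2 : HasDerivAt (fun s : ℂ => h (v.1, v.2 + s))
        (fderiv ℂ h v ((0 : ℂ), (1 : ℂ))) 0 := hF2.comp_hasDerivAt 0 hu2
    have hdiffh2 : ∀ s ∈ Metric.ball (0 : ℂ) ρ,
        DifferentiableAt ℂ (fun s : ℂ => h (v.1, v.2 + s)) s := by
      intro s hs
      have hmem : ((v.1, v.2 + s) : ℂ × ℂ) ∈ UU x x.2 := by
        apply hwU; rw [hdist2]; exact hmemball s hs
      have hd1 : DifferentiableAt ℂ h ((v.1, v.2 + s) : ℂ × ℂ) :=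
        hhU.differentiableAt ((hUopen x x.2).mem_nhds hmem)
      exact hd1.comp s ((differentiableAt_const _).prodMk (differentiableAt_id.const_add _))
    have hgl2 : ∀ s ∈ Metric.ball (0 : ℂ) ρ,
        g (v.1, v.2 + s) = (h (v.1, v.2 + s)).re := by
      intro s hs
      apply hhre
      apply hwU; rw [hdist2]; exact hmemball s hs
    have hq2 : HasDerivAt (fun s => ev (P n) (v.1, v.2 + s))
        (ev (MvPolynomial.pderiv 1 (P n)) v) 0 := by
      have := hasDerivAt_ev_snd (P n) v.1 v.2 0
      rwa [hv0'] at this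
    have hPb2 : ∀ s ∈ Metric.ball (0 : ℂ) ρ, ev (P n) (v.1, v.2 + s) ≠ 0 ∧
        |(d : ℝ) ^ n * g (v.1, v.2 + s) -
          Real.log (‖ev (P n) (v.1, v.2 + s)‖)| ≤ C₀ := by
      intro s hs
      apply hPb; rw [hdist2]; exact hmemball s hs
    have hb2 := line_bound ρ C₀ ((d : ℝ) ^ n) hρpos
      (fun s => h (v.1, v.2 + s)) (fun s => ev (P n) (v.1, v.2 + s))
      (fun s => g (v.1, v.2 + s)) hdiffh2 hgl2 _ hcomp2
      (fun s => (hasDerivAt_ev_snd (P n) v.1 v.2 s).differentiableAt) _ hq2 hPb2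
    have hb2' : ‖(d : ℂ) ^ n * fderiv ℂ h v ((0 : ℂ), (1 : ℂ)) -
        ev (MvPolynomial.pderiv 1 (P n)) v / ev (P n) v‖
        ≤ 3 * Real.exp (2 * C₀) / ρ := by
      have h2 := hb2
      simp only [hv0'] at h2
      convert h2 using 3
      push_cast
      ring
    have hw2 : wirtW g v = fderiv ℂ h v ((0 : ℂ), (1 : ℂ)) / 2 := by
      unfold wirtW
      exact wirt_re_of_holo g h (UU x x.2) (hUopen x x.2) hhU hhre v hvU
        ((0 : ℂ), (1 : ℂ)) (0, Complex.I) (by simp)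
    have hfinal2 : wirtW g v -
        ev (MvPolynomial.pderiv 1 (P n)) v / (2 * (d : ℂ) ^ n * ev (P n) v)
        = ((d : ℂ) ^ n * fderiv ℂ h v ((0 : ℂ), (1 : ℂ)) -
            ev (MvPolynomial.pderiv 1 (P n)) v / ev (P n) v) / (2 * (d : ℂ) ^ n) := by
      rw [hw2]; field_simp
    rw [hfinal2, norm_div]
    have habs2 : ‖2 * (d : ℂ) ^ n‖ = 2 * (d : ℝ) ^ n := by
      rw [norm_mul, norm_pow]
      simp
    rw [habs2]
    calc ‖(d : ℂ) ^ n * fderiv ℂ h v ((0 : ℂ), (1 : ℂ)) -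
            ev (MvPolynomial.pderiv 1 (P n)) v / ev (P n) v‖ / (2 * (d : ℝ) ^ n)
        ≤ (3 * Real.exp (2 * C₀) / ρ) / (2 * (d : ℝ) ^ n) := by gcongr
      _ ≤ (3 * Real.exp (2 * C₀) / ρ) / (d : ℝ) ^ n := by
          apply div_le_div_of_nonneg_left (by positivity) hdpow (by linarith)
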